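/- arXiv:2408.15417 — 3 statements merged into one kernel-verified Lean document; each statement's English description precedes it below -/
import Mathlib

section
/- Fix λ > 0. A pair (W_λ, H_λ) ∈ ℝ^{V×d} × ℝ^{d×m} minimizes the NTP-UFM objective CE(WH) + (λ/2)‖W‖_F² + (λ/2)‖H‖_F² if and only if there exists a minimizer L_λ of min over {L ∈ ℝ^{V×m} : rank(L) ≤ d} of CE(L) + λ‖L‖_*, with singular value decomposition L_λ = UΣVᵀ where U ∈ ℝ^{V×r} and V ∈ ℝ^{m×r} have orthonormal columns, Σ ∈ ℝ^{r×r} is diagonal with positive entries, and r = rank(L_λ) ≤ d, such that W_λ H_λ = L_λ, W_λ W_λᵀ = UΣUᵀ, and H_λᵀ H_λ = VΣVᵀ. -/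
open Filter Topology Matrix

noncomputable section

/-- Frobenius norm of a real matrix. -/
def frobNorm {a b : ℕ} (A : Matrix (Fin a) (Fin b) ℝ) : ℝ :=
  Real.sqrt (∑ i, ∑ j, (A i j) ^ 2)

/-- Nuclear norm: sum of the singular values of `A`. -/
def nuclearNorm {a b : ℕ} (A : Matrix (Fin a) (Fin b) ℝ) : ℝ :=
  ∑ i, Real.sqrt ((Matrix.isHermitian_conjTranspose_mul_self A).eigenvalues i)

/-- The NTP cross-entropy loss. -/
def CEloss {V m : ℕ} (piv : Fin m → ℝ) (p : Fin m → Fin V → ℝ)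
    (L : Matrix (Fin V) (Fin m) ℝ) : ℝ :=
  - ∑ j, piv j * ∑ z ∈ Finset.univ.filter (fun z => 0 < p j z),
      p j z * Real.log (Real.exp (L z j) / ∑ v, Real.exp (L v j))

/-! The nuclear norm is the minimal balanced factorization cost:
`2 ‖L‖_* = min {‖W‖_F² + ‖H‖_F² : W * H = L}`, the minimum over factorizations through `ℝ^d`
for any `d ≥ rank L`. For the lower bound take an SVD `W H = U Σ Vᵀ`: then
`‖W H‖_* = tr (Uᵀ W H V) = ⟪Wᵀ U, H V⟫`, which AM-GM and the contractions `‖Wᵀ U‖_F ≤ ‖W‖_F`,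
`‖H V‖_F ≤ ‖H‖_F` bound by `(‖W‖_F² + ‖H‖_F²) / 2`; the minimum is attained at `W = U √Σ`,
`H = √Σ Vᵀ`. So minimizing `CE(W H) + λ/2 (‖W‖_F² + ‖H‖_F²)` amounts to minimizing
`CE(L) + λ ‖L‖_*` over `rank L ≤ d`, and a minimizing pair is balanced, i.e. attains equality
in each step: `Wᵀ U = H V`, and the columns of `W` and `Hᵀ` lie in the column spaces of `U` and
`V`, which forces `W Wᵀ = U Σ Uᵀ` and `Hᵀ H = V Σ Vᵀ`. -/

theorem frobNorm_sq {a b : ℕ} (A : Matrix (Fin a) (Fin b) ℝ) :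
    frobNorm A ^ 2 = (Aᵀ * A).trace := by
  rw [frobNorm, Real.sq_sqrt (by positivity), trace, Finset.sum_comm]
  simp [mul_apply, sq]

theorem Fintype.sum_subtype_ne_zero {κ R M : Type*} [Fintype κ] [Zero R] [DecidableEq R]
    [AddCommMonoid M] (μ : κ → R) (g : κ → M) (hg : ∀ j, μ j = 0 → g j = 0) :
    ∑ k : {j // μ j ≠ 0}, g k = ∑ j, g j := by
  rw [← Finset.sum_subtype (Finset.univ.filter (μ · ≠ 0)) (by simp)]
  exact Finset.sum_filter_of_ne fun j _ hj => by_contra fun h => hj (hg j (not_not.mp h))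

namespace Matrix

variable {ι κ μ ρ : Type*} [Fintype ι] [Fintype κ] [Fintype μ] [Fintype ρ] {a b d : ℕ}

theorem trace_transpose_mul_self_nonneg (A : Matrix ι κ ℝ) : 0 ≤ (Aᵀ * A).trace := by
  simpa using (posSemidef_conjTranspose_mul_self A).trace_nonneg

theorem trace_transpose_mul_self_sub (A B : Matrix ι κ ℝ) :
    ((A - B)ᵀ * (A - B)).trace = (Aᵀ * A).trace - 2 * (Aᵀ * B).trace + (Bᵀ * B).trace := by
  have hBA : (Bᵀ * A).trace = (Aᵀ * B).trace := by
    rw [← trace_transpose, transpose_mul, transpose_transpose]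
  rw [transpose_sub, Matrix.sub_mul, Matrix.mul_sub, Matrix.mul_sub, trace_sub, trace_sub,
    trace_sub, hBA]
  ring

theorem two_mul_trace_transpose_mul_le (A B : Matrix ι κ ℝ) :
    2 * (Aᵀ * B).trace ≤ (Aᵀ * A).trace + (Bᵀ * B).trace := by
  linarith [trace_transpose_mul_self_nonneg (A - B), trace_transpose_mul_self_sub A B]

theorem eq_of_trace_transpose_mul_self_add_le {A B : Matrix ι κ ℝ}
    (h : (Aᵀ * A).trace + (Bᵀ * B).trace ≤ 2 * (Aᵀ * B).trace) : A = B := by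
  have h0 : ((A - B)ᴴ * (A - B)).trace = 0 := by
    rw [conjTranspose_eq_transpose_of_trivial]
    linarith [trace_transpose_mul_self_nonneg (A - B), trace_transpose_mul_self_sub A B]
  exact sub_eq_zero.mp (trace_conjTranspose_mul_self_eq_zero_iff.mp h0)

section Orthonormal

variable [DecidableEq ρ] {U : Matrix κ ρ ℝ}

theorem trace_transpose_mul_self_eq_add_of_orthonormal (hU : Uᵀ * U = 1) (M : Matrix ι κ ℝ) :
    (Mᵀ * M).trace = ((M * U)ᵀ * (M * U)).trace
      + ((M - M * U * Uᵀ)ᵀ * (M - M * U * Uᵀ)).trace := by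
  have hcross : (Mᵀ * (M * U * Uᵀ)).trace = ((M * U)ᵀ * (M * U)).trace := by
    rw [← Matrix.mul_assoc, trace_mul_comm, transpose_mul, Matrix.mul_assoc]
  have hsq : ((M * U * Uᵀ)ᵀ * (M * U * Uᵀ)).trace = ((M * U)ᵀ * (M * U)).trace := by
    have : (M * U * Uᵀ)ᵀ * (M * U * Uᵀ) = U * ((M * U)ᵀ * (M * U)) * Uᵀ := by
      simp only [transpose_mul, transpose_transpose, Matrix.mul_assoc]
    rw [this, trace_mul_comm, ← Matrix.mul_assoc, hU, Matrix.one_mul]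
  rw [trace_transpose_mul_self_sub, hcross, hsq]
  ring

theorem trace_transpose_mul_self_mul_le_of_orthonormal (hU : Uᵀ * U = 1) (M : Matrix ι κ ℝ) :
    ((M * U)ᵀ * (M * U)).trace ≤ (Mᵀ * M).trace := by
  linarith [trace_transpose_mul_self_eq_add_of_orthonormal hU M,
    trace_transpose_mul_self_nonneg (M - M * U * Uᵀ)]

theorem eq_mul_mul_transpose_of_trace_le (hU : Uᵀ * U = 1) {M : Matrix ι κ ℝ}
    (h : (Mᵀ * M).trace ≤ ((M * U)ᵀ * (M * U)).trace) : M = M * U * Uᵀ := by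
  have h0 : ((M - M * U * Uᵀ)ᴴ * (M - M * U * Uᵀ)).trace = 0 := by
    rw [conjTranspose_eq_transpose_of_trivial]
    linarith [trace_transpose_mul_self_eq_add_of_orthonormal hU M,
      trace_transpose_mul_self_nonneg (M - M * U * Uᵀ)]
  exact sub_eq_zero.mp (trace_conjTranspose_mul_self_eq_zero_iff.mp h0)

end Orthonormal

section Factorization

variable [DecidableEq ρ] {U : Matrix ι ρ ℝ} {Vm : Matrix μ ρ ℝ}

theorem transpose_mul_mul_mul_transpose_mul (hU : Uᵀ * U = 1) (hV : Vmᵀ * Vm = 1)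
    (D : Matrix ρ ρ ℝ) : Uᵀ * (U * D * Vmᵀ) * Vm = D := by
  simp only [← Matrix.mul_assoc, hU, Matrix.one_mul]
  rw [Matrix.mul_assoc, hV, Matrix.mul_one]

theorem two_mul_trace_mul_mul_le (hU : Uᵀ * U = 1) (hV : Vmᵀ * Vm = 1)
    (W : Matrix ι κ ℝ) (H : Matrix κ μ ℝ) :
    2 * (Uᵀ * (W * H) * Vm).trace ≤ (Wᵀ * W).trace + (Hᵀ * H).trace := by
  have hAB : Uᵀ * (W * H) * Vm = (Wᵀ * U)ᵀ * (H * Vm) := by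
    simp only [transpose_mul, transpose_transpose, Matrix.mul_assoc]
  have hW : ((Wᵀ * U)ᵀ * (Wᵀ * U)).trace ≤ (Wᵀ * W).trace := by
    have := trace_transpose_mul_self_mul_le_of_orthonormal hU Wᵀ
    rwa [transpose_transpose, trace_mul_comm W] at this
  rw [hAB]
  linarith [two_mul_trace_transpose_mul_le (Wᵀ * U) (H * Vm),
    trace_transpose_mul_self_mul_le_of_orthonormal hV H]

theorem mul_transpose_self_eq_of_trace_le (hU : Uᵀ * U = 1) (hV : Vmᵀ * Vm = 1)
    {W : Matrix ι κ ℝ} {H : Matrix κ μ ℝ}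
    (h : (Wᵀ * W).trace + (Hᵀ * H).trace ≤ 2 * (Uᵀ * (W * H) * Vm).trace) :
    W * Wᵀ = U * (Uᵀ * (W * H) * Vm) * Uᵀ ∧ Hᵀ * H = Vm * (Uᵀ * (W * H) * Vm) * Vmᵀ := by
  set A := Wᵀ * U
  set B := H * Vm
  have hAB : Uᵀ * (W * H) * Vm = Aᵀ * B := by
    simp only [A, B, transpose_mul, transpose_transpose, Matrix.mul_assoc]
  have hA : (Aᵀ * A).trace ≤ (Wᵀ * W).trace := by
    have := trace_transpose_mul_self_mul_le_of_orthonormal hU Wᵀ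
    rwa [transpose_transpose, trace_mul_comm W] at this
  have hB : (Bᵀ * B).trace ≤ (Hᵀ * H).trace :=
    trace_transpose_mul_self_mul_le_of_orthonormal hV H
  have hle := two_mul_trace_transpose_mul_le A B
  rw [hAB] at h ⊢
  have hAeqB : A = B := eq_of_trace_transpose_mul_self_add_le (by linarith)
  have hWfac : Wᵀ = A * Uᵀ := by
    refine eq_mul_mul_transpose_of_trace_le hU ?_
    rw [transpose_transpose, trace_mul_comm W]
    linarith
  have hHfac : H = B * Vmᵀ := eq_mul_mul_transpose_of_trace_le hV (by linarith)
  constructor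
  · conv_lhs => rw [← transpose_transpose W, hWfac]
    rw [← hAeqB]
    simp only [transpose_mul, transpose_transpose, Matrix.mul_assoc]
  · conv_lhs => rw [hHfac]
    rw [transpose_mul, transpose_transpose, hAeqB]
    simp only [Matrix.mul_assoc]

end Factorization

theorem exists_mul_diagonal_mul_transpose_eq [DecidableEq ρ] {L : Matrix ι κ ℝ}
    {Vm : Matrix κ ρ ℝ} {σ : ρ → ℝ} (hσ : ∀ k, σ k ≠ 0)
    (hLV : (L * Vm)ᵀ * (L * Vm) = diagonal fun k => σ k ^ 2) (hL : L * Vm * Vmᵀ = L) :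
    ∃ U : Matrix ι ρ ℝ, Uᵀ * U = 1 ∧ L = U * diagonal σ * Vmᵀ := by
  refine ⟨L * Vm * diagonal fun k => (σ k)⁻¹, ?_, ?_⟩
  · rw [transpose_mul, diagonal_transpose, Matrix.mul_assoc, ← Matrix.mul_assoc (L * Vm)ᵀ, hLV,
      diagonal_mul_diagonal, diagonal_mul_diagonal, ← diagonal_one]
    exact congrArg diagonal (funext fun k => by field_simp [hσ k])
  · rw [Matrix.mul_assoc (L * Vm), diagonal_mul_diagonal,
      show (fun k => (σ k)⁻¹ * σ k) = fun _ => 1 from funext fun k => inv_mul_cancel₀ (hσ k),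
      diagonal_one, Matrix.mul_one, hL]

section SVD

variable [DecidableEq κ]

namespace IsHermitian

variable {A : Matrix κ κ ℝ} (hA : A.IsHermitian)

theorem transpose_eigenvectorUnitary_mul_self :
    (hA.eigenvectorUnitary : Matrix κ κ ℝ)ᵀ * hA.eigenvectorUnitary = 1 := by
  simpa [star_eq_conjTranspose] using Unitary.coe_star_mul_self hA.eigenvectorUnitary

theorem eigenvectorUnitary_mul_transpose_self :
    (hA.eigenvectorUnitary : Matrix κ κ ℝ) * (hA.eigenvectorUnitary : Matrix κ κ ℝ)ᵀ = 1 := by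
  simpa [star_eq_conjTranspose] using Unitary.coe_mul_star_self hA.eigenvectorUnitary

theorem transpose_eigenvectorUnitary_mul_mul_eq_diagonal :
    (hA.eigenvectorUnitary : Matrix κ κ ℝ)ᵀ * A * hA.eigenvectorUnitary
      = diagonal hA.eigenvalues := by
  have h := hA.conjStarAlgAut_star_eigenvectorUnitary
  rw [Unitary.conjStarAlgAut_star_apply] at h
  simpa [star_eq_conjTranspose] using h

end IsHermitian

theorem exists_svd_subtype (L : Matrix ι κ ℝ) :
    ∃ (U : Matrix ι {j // (isHermitian_conjTranspose_mul_self L).eigenvalues j ≠ 0} ℝ)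
      (Vm : Matrix κ {j // (isHermitian_conjTranspose_mul_self L).eigenvalues j ≠ 0} ℝ),
      Uᵀ * U = 1 ∧ Vmᵀ * Vm = 1 ∧
      L = U * diagonal (fun k : {j // (isHermitian_conjTranspose_mul_self L).eigenvalues j ≠ 0} =>
        √((isHermitian_conjTranspose_mul_self L).eigenvalues k.1)) * Vmᵀ := by
  set hA := isHermitian_conjTranspose_mul_self L
  set μ := hA.eigenvalues
  set P : Matrix κ κ ℝ := (hA.eigenvectorUnitary : Matrix κ κ ℝ)
  have hPD : Pᵀ * (Lᵀ * L) * P = diagonal μ := by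
    rw [← conjTranspose_eq_transpose_of_trivial]
    exact hA.transpose_eigenvectorUnitary_mul_mul_eq_diagonal
  set e : {j // μ j ≠ 0} → κ := Subtype.val
  have he : Function.Injective e := Subtype.val_injective
  set Vm : Matrix κ {j // μ j ≠ 0} ℝ := P.submatrix id e
  have hconj : ∀ X : Matrix κ κ ℝ, Vmᵀ * X * Vm = (Pᵀ * X * P).submatrix e e := fun _ => rfl
  have hPP : Pᵀ * P = 1 := hA.transpose_eigenvectorUnitary_mul_self
  have hV : Vmᵀ * Vm = 1 := by
    simpa [hPP, submatrix_one _ he] using hconj 1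
  have hμ : ∀ k : {j // μ j ≠ 0}, √(μ k) ^ 2 = μ k := fun k =>
    Real.sq_sqrt (eigenvalues_conjTranspose_mul_self_nonneg L k)
  have hLV : (L * Vm)ᵀ * (L * Vm) = diagonal fun k : {j // μ j ≠ 0} => √(μ k) ^ 2 := by
    rw [transpose_mul, ← Matrix.mul_assoc, Matrix.mul_assoc _ Lᵀ, hconj, hPD,
      submatrix_diagonal _ _ he]
    exact congrArg diagonal (funext fun k => (hμ k).symm)
  -- Dropping the zero eigenvalues loses no Frobenius mass, so `L` vanishes off the span of `Vm`.
  have hL : L * Vm * Vmᵀ = L := by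
    refine (eq_mul_mul_transpose_of_trace_le hV (le_of_eq ?_)).symm
    have htrace : ∑ j, μ j = (Lᵀ * L).trace := by
      rw [← trace_diagonal, ← hPD, Matrix.mul_assoc, trace_mul_comm Pᵀ, Matrix.mul_assoc,
        hA.eigenvectorUnitary_mul_transpose_self, Matrix.mul_one]
    rw [← htrace, hLV, trace_diagonal, Finset.sum_congr rfl fun k _ => hμ k]
    exact (Fintype.sum_subtype_ne_zero μ μ fun _ h => h).symm
  obtain ⟨U, hU, hUL⟩ := exists_mul_diagonal_mul_transpose_eq (fun k : {j // μ j ≠ 0} =>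
    (Real.sqrt_pos.mpr (lt_of_le_of_ne (eigenvalues_conjTranspose_mul_self_nonneg L k)
      (Ne.symm k.2))).ne') hLV hL
  exact ⟨U, Vm, hU, hV, hUL⟩

end SVD

theorem exists_svd (L : Matrix (Fin a) (Fin b) ℝ) :
    ∃ (U : Matrix (Fin a) (Fin L.rank) ℝ) (Vm : Matrix (Fin b) (Fin L.rank) ℝ)
      (σ : Fin L.rank → ℝ), Uᵀ * U = 1 ∧ Vmᵀ * Vm = 1 ∧ (∀ i, 0 < σ i) ∧
      L = U * diagonal σ * Vmᵀ ∧ ∑ i, σ i = nuclearNorm L := by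
  set hA := isHermitian_conjTranspose_mul_self L
  obtain ⟨U, Vm, hU, hV, hL⟩ := exists_svd_subtype L
  have hrank : Fintype.card {j // hA.eigenvalues j ≠ 0} = L.rank := by
    rw [← hA.rank_eq_card_non_zero_eigs, rank_conjTranspose_mul_self]
  set e : Fin L.rank ≃ {j // hA.eigenvalues j ≠ 0} := (Fintype.equivFinOfCardEq hrank).symm
  refine ⟨U.submatrix id e, Vm.submatrix id e, fun k => √(hA.eigenvalues (e k)), ?_, ?_,
    fun k => Real.sqrt_pos.mpr <| lt_of_le_of_ne (eigenvalues_conjTranspose_mul_self_nonneg L _)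
      (Ne.symm (e k).2), ?_, ?_⟩
  · rw [transpose_submatrix, ← submatrix_mul _ _ _ _ _ Function.bijective_id, hU,
      submatrix_one_equiv]
  · rw [transpose_submatrix, ← submatrix_mul _ _ _ _ _ Function.bijective_id, hV,
      submatrix_one_equiv]
  · have hσ : diagonal (fun k => √(hA.eigenvalues (e k)))
        = (diagonal fun k : {j // hA.eigenvalues j ≠ 0} => √(hA.eigenvalues k)).submatrix e e :=
      by simp [Function.comp_def]
    rw [hσ, transpose_submatrix, submatrix_mul_equiv, submatrix_mul_equiv, submatrix_id_id]
    exact hL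
  · rw [Equiv.sum_comp e (fun k => √(hA.eigenvalues k)),
      Fintype.sum_subtype_ne_zero hA.eigenvalues (fun j => √(hA.eigenvalues j))
        fun j h => by rw [h, Real.sqrt_zero]]
    rfl

theorem exists_mul_eq_frobNorm_sq_eq_nuclearNorm (L : Matrix (Fin a) (Fin b) ℝ)
    (hd : L.rank ≤ d) :
    ∃ (W : Matrix (Fin a) (Fin d) ℝ) (H : Matrix (Fin d) (Fin b) ℝ),
      W * H = L ∧ frobNorm W ^ 2 = nuclearNorm L ∧ frobNorm H ^ 2 = nuclearNorm L := by
  obtain ⟨U, Vm, σ, hU, hV, hσ, hL, hsum⟩ := exists_svd L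
  set D := diagonal fun k => √(σ k)
  have hDD : D * D = diagonal σ := by
    rw [diagonal_mul_diagonal]
    exact congrArg diagonal (funext fun k => Real.mul_self_sqrt (hσ k).le)
  set J : Matrix (Fin L.rank) (Fin d) ℝ :=
    (1 : Matrix (Fin d) (Fin d) ℝ).submatrix (Fin.castLE hd) id
  have hJ : J * Jᵀ = 1 := by
    rw [transpose_submatrix, transpose_one, ← submatrix_mul _ _ _ _ _ Function.bijective_id,
      Matrix.mul_one, submatrix_one _ (Fin.castLE_injective hd)]
  have hDJJD : D * J * (Jᵀ * D) = diagonal σ := by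
    rw [Matrix.mul_assoc, ← Matrix.mul_assoc J, hJ, Matrix.one_mul, hDD]
  have hDt : Dᵀ = D := diagonal_transpose _
  refine ⟨U * D * J, Jᵀ * D * Vmᵀ, ?_, ?_, ?_⟩
  · calc U * D * J * (Jᵀ * D * Vmᵀ) = U * (D * J * (Jᵀ * D)) * Vmᵀ := by
          simp only [Matrix.mul_assoc]
      _ = L := by rw [hDJJD]; exact hL.symm
  · rw [frobNorm_sq, ← hsum, ← trace_diagonal, ← hDJJD, trace_mul_comm (D * J)]
    simp only [transpose_mul, hDt, Matrix.mul_assoc]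
    rw [← Matrix.mul_assoc Uᵀ, hU, Matrix.one_mul]
  · rw [frobNorm_sq, ← hsum, ← trace_diagonal, ← hDJJD]
    simp only [transpose_mul, transpose_transpose, hDt, Matrix.mul_assoc]
    rw [trace_mul_comm Vm]
    simp only [Matrix.mul_assoc, hV, Matrix.mul_one]

theorem trace_transpose_mul_mul_le_nuclearNorm [DecidableEq ρ]
    {U : Matrix (Fin a) ρ ℝ} {Vm : Matrix (Fin b) ρ ℝ} (hU : Uᵀ * U = 1) (hV : Vmᵀ * Vm = 1)
    (L : Matrix (Fin a) (Fin b) ℝ) : (Uᵀ * L * Vm).trace ≤ nuclearNorm L := by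
  obtain ⟨W, H, hWH, hW, hH⟩ := exists_mul_eq_frobNorm_sq_eq_nuclearNorm L le_rfl
  have := two_mul_trace_mul_mul_le hU hV W H
  rw [← frobNorm_sq, ← frobNorm_sq, hW, hH, hWH] at this
  linarith

theorem two_mul_nuclearNorm_mul_le (W : Matrix (Fin a) (Fin d) ℝ)
    (H : Matrix (Fin d) (Fin b) ℝ) :
    2 * nuclearNorm (W * H) ≤ frobNorm W ^ 2 + frobNorm H ^ 2 := by
  obtain ⟨U, Vm, σ, hU, hV, -, hL, hsum⟩ := exists_svd (W * H)
  have htrace : (Uᵀ * (W * H) * Vm).trace = nuclearNorm (W * H) := by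
    have := transpose_mul_mul_mul_transpose_mul hU hV (diagonal σ)
    rw [← hL] at this
    rw [this, trace_diagonal, hsum]
  rw [frobNorm_sq, frobNorm_sq, ← htrace]
  exact two_mul_trace_mul_mul_le hU hV W H

theorem rank_mul_le_inner (W : Matrix (Fin a) (Fin d) ℝ) (H : Matrix (Fin d) (Fin b) ℝ) :
    (W * H).rank ≤ d :=
  (rank_mul_le_left W H).trans (rank_le_width W)

theorem exists_svd_of_frobNorm_sq_add_eq {W : Matrix (Fin a) (Fin d) ℝ}
    {H : Matrix (Fin d) (Fin b) ℝ} (h : frobNorm W ^ 2 + frobNorm H ^ 2 = 2 * nuclearNorm (W * H)) :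
    ∃ (U : Matrix (Fin a) (Fin (W * H).rank) ℝ) (Vm : Matrix (Fin b) (Fin (W * H).rank) ℝ)
      (σ : Fin (W * H).rank → ℝ), Uᵀ * U = 1 ∧ Vmᵀ * Vm = 1 ∧ (∀ i, 0 < σ i) ∧
      W * H = U * diagonal σ * Vmᵀ ∧
      W * Wᵀ = U * diagonal σ * Uᵀ ∧ Hᵀ * H = Vm * diagonal σ * Vmᵀ := by
  obtain ⟨U, Vm, σ, hU, hV, hσ, hL, hsum⟩ := exists_svd (W * H)
  have hdiag : Uᵀ * (W * H) * Vm = diagonal σ := by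
    have := transpose_mul_mul_mul_transpose_mul hU hV (diagonal σ)
    rwa [← hL] at this
  have hle : (Wᵀ * W).trace + (Hᵀ * H).trace ≤ 2 * (Uᵀ * (W * H) * Vm).trace := by
    rw [← frobNorm_sq, ← frobNorm_sq, hdiag, trace_diagonal, hsum, h]
  refine ⟨U, Vm, σ, hU, hV, hσ, hL, ?_⟩
  rw [← hdiag]
  exact mul_transpose_self_eq_of_trace_le hU hV hle

theorem frobNorm_sq_add_le_of_svd [DecidableEq ρ]
    {W : Matrix (Fin a) (Fin d) ℝ} {H : Matrix (Fin d) (Fin b) ℝ} {U : Matrix (Fin a) ρ ℝ}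
    {Vm : Matrix (Fin b) ρ ℝ} {σ : ρ → ℝ} (hU : Uᵀ * U = 1) (hV : Vmᵀ * Vm = 1)
    (hL : W * H = U * diagonal σ * Vmᵀ) (hW : W * Wᵀ = U * diagonal σ * Uᵀ)
    (hH : Hᵀ * H = Vm * diagonal σ * Vmᵀ) :
    frobNorm W ^ 2 + frobNorm H ^ 2 ≤ 2 * nuclearNorm (W * H) := by
  have hWσ : frobNorm W ^ 2 = ∑ i, σ i := by
    rw [frobNorm_sq, trace_mul_comm, hW, trace_mul_comm, ← Matrix.mul_assoc, hU, Matrix.one_mul,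
      trace_diagonal]
  have hHσ : frobNorm H ^ 2 = ∑ i, σ i := by
    rw [frobNorm_sq, hH, trace_mul_comm, ← Matrix.mul_assoc, hV, Matrix.one_mul, trace_diagonal]
  have hσ := trace_transpose_mul_mul_le_nuclearNorm hU hV (W * H)
  rw [hL, transpose_mul_mul_mul_transpose_mul hU hV, trace_diagonal] at hσ
  rw [hWσ, hHσ, hL]
  linarith

end Matrix

section Minimizers

variable {a b d : ℕ} (f : Matrix (Fin a) (Fin b) ℝ → ℝ) {lam : ℝ}

theorem frobNorm_sq_add_eq_of_isMin (hlam : 0 < lam) {W : Matrix (Fin a) (Fin d) ℝ}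
    {H : Matrix (Fin d) (Fin b) ℝ}
    (hmin : ∀ (W' : Matrix (Fin a) (Fin d) ℝ) (H' : Matrix (Fin d) (Fin b) ℝ),
      f (W * H) + lam / 2 * frobNorm W ^ 2 + lam / 2 * frobNorm H ^ 2 ≤
        f (W' * H') + lam / 2 * frobNorm W' ^ 2 + lam / 2 * frobNorm H' ^ 2) :
    frobNorm W ^ 2 + frobNorm H ^ 2 = 2 * nuclearNorm (W * H) := by
  obtain ⟨W₀, H₀, hWH₀, hW₀, hH₀⟩ :=
    exists_mul_eq_frobNorm_sq_eq_nuclearNorm (W * H) (rank_mul_le_inner W H)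
  have hle := hmin W₀ H₀
  rw [hWH₀, hW₀, hH₀] at hle
  refine le_antisymm ?_ (two_mul_nuclearNorm_mul_le W H)
  nlinarith

theorem factorized_minimizer_iff (hlam : 0 < lam) (W : Matrix (Fin a) (Fin d) ℝ)
    (H : Matrix (Fin d) (Fin b) ℝ) :
    (∀ (W' : Matrix (Fin a) (Fin d) ℝ) (H' : Matrix (Fin d) (Fin b) ℝ),
        f (W * H) + lam / 2 * frobNorm W ^ 2 + lam / 2 * frobNorm H ^ 2 ≤
        f (W' * H') + lam / 2 * frobNorm W' ^ 2 + lam / 2 * frobNorm H' ^ 2)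
    ↔
    ∃ L : Matrix (Fin a) (Fin b) ℝ,
      L.rank ≤ d ∧
      (∀ L' : Matrix (Fin a) (Fin b) ℝ, L'.rank ≤ d →
          f L + lam * nuclearNorm L ≤ f L' + lam * nuclearNorm L') ∧
      ∃ (U : Matrix (Fin a) (Fin L.rank) ℝ) (Vm : Matrix (Fin b) (Fin L.rank) ℝ)
        (σ : Fin L.rank → ℝ),
        Uᵀ * U = 1 ∧ Vmᵀ * Vm = 1 ∧ (∀ i, 0 < σ i) ∧
        L = U * diagonal σ * Vmᵀ ∧
        W * H = L ∧
        W * Wᵀ = U * diagonal σ * Uᵀ ∧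
        Hᵀ * H = Vm * diagonal σ * Vmᵀ := by
  constructor
  · intro hmin
    have hbal := frobNorm_sq_add_eq_of_isMin f hlam hmin
    obtain ⟨U, Vm, σ, hU, hV, hσ, hL, hW, hH⟩ := exists_svd_of_frobNorm_sq_add_eq hbal
    refine ⟨W * H, rank_mul_le_inner W H, fun L' hL' => ?_, U, Vm, σ, hU, hV, hσ, hL, rfl, hW, hH⟩
    obtain ⟨W', H', hWH', hW', hH'⟩ := exists_mul_eq_frobNorm_sq_eq_nuclearNorm L' hL'
    have hle := hmin W' H'
    rw [hWH', hW', hH'] at hle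
    linear_combination hle - lam / 2 * hbal
  · rintro ⟨L, -, hLmin, U, Vm, σ, hU, hV, -, hL, rfl, hW, hH⟩ W' H'
    have hbal := frobNorm_sq_add_le_of_svd hU hV hL hW hH
    have hL' := hLmin (W' * H') (rank_mul_le_inner W' H')
    have hnuc := two_mul_nuclearNorm_mul_le W' H'
    nlinarith

end Minimizers

theorem stmt_1_general (V m d : ℕ)
    (piv : Fin m → ℝ)
    (p : Fin m → Fin V → ℝ)
    (lam : ℝ) (hlam : 0 < lam)
    (W : Matrix (Fin V) (Fin d) ℝ) (H : Matrix (Fin d) (Fin m) ℝ) :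
    (∀ (W' : Matrix (Fin V) (Fin d) ℝ) (H' : Matrix (Fin d) (Fin m) ℝ),
        CEloss piv p (W * H) + lam / 2 * frobNorm W ^ 2 + lam / 2 * frobNorm H ^ 2 ≤
        CEloss piv p (W' * H') + lam / 2 * frobNorm W' ^ 2 + lam / 2 * frobNorm H' ^ 2)
    ↔
    ∃ L : Matrix (Fin V) (Fin m) ℝ,
      L.rank ≤ d ∧
      (∀ L' : Matrix (Fin V) (Fin m) ℝ, L'.rank ≤ d →
          CEloss piv p L + lam * nuclearNorm L ≤ CEloss piv p L' + lam * nuclearNorm L') ∧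
      ∃ (U : Matrix (Fin V) (Fin L.rank) ℝ) (Vm : Matrix (Fin m) (Fin L.rank) ℝ)
        (σ : Fin L.rank → ℝ),
        Uᵀ * U = 1 ∧ Vmᵀ * Vm = 1 ∧ (∀ i, 0 < σ i) ∧
        L = U * Matrix.diagonal σ * Vmᵀ ∧
        W * H = L ∧
        W * Wᵀ = U * Matrix.diagonal σ * Uᵀ ∧
        Hᵀ * H = Vm * Matrix.diagonal σ * Vmᵀ :=
  factorized_minimizer_iff (CEloss piv p) hlam W H

/-- `(W, H)` minimizes the NTP-UFM objective iff there is a minimizer `L` of the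
rank-constrained nuclear-norm-regularized logit problem such that, with `L = UΣVᵀ` an SVD of
`L` (orthonormal columns, positive diagonal, `r = rank L ≤ d`), one has `W * H = L`,
`W * Wᵀ = UΣUᵀ`, and `Hᵀ * H = VΣVᵀ`. -/
theorem stmt_1 (V m d : ℕ) (hV : 2 ≤ V) (hm : 0 < m) (hd : 0 < d)
    (piv : Fin m → ℝ) (hpiv : ∀ j, 0 < piv j) (hpisum : ∑ j, piv j = 1)
    (p : Fin m → Fin V → ℝ) (hp : ∀ j z, 0 ≤ p j z) (hpsum : ∀ j, ∑ z, p j z = 1)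
    (lam : ℝ) (hlam : 0 < lam)
    (W : Matrix (Fin V) (Fin d) ℝ) (H : Matrix (Fin d) (Fin m) ℝ) :
    (∀ (W' : Matrix (Fin V) (Fin d) ℝ) (H' : Matrix (Fin d) (Fin m) ℝ),
        CEloss piv p (W * H) + lam / 2 * frobNorm W ^ 2 + lam / 2 * frobNorm H ^ 2 ≤
        CEloss piv p (W' * H') + lam / 2 * frobNorm W' ^ 2 + lam / 2 * frobNorm H' ^ 2)
    ↔
    ∃ L : Matrix (Fin V) (Fin m) ℝ,
      L.rank ≤ d ∧
      (∀ L' : Matrix (Fin V) (Fin m) ℝ, L'.rank ≤ d →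
          CEloss piv p L + lam * nuclearNorm L ≤ CEloss piv p L' + lam * nuclearNorm L') ∧
      ∃ (U : Matrix (Fin V) (Fin L.rank) ℝ) (Vm : Matrix (Fin m) (Fin L.rank) ℝ)
        (σ : Fin L.rank → ℝ),
        Uᵀ * U = 1 ∧ Vmᵀ * Vm = 1 ∧ (∀ i, 0 < σ i) ∧
        L = U * Matrix.diagonal σ * Vmᵀ ∧
        W * H = L ∧
        W * Wᵀ = U * Matrix.diagonal σ * Uᵀ ∧
        Hᵀ * H = Vm * Matrix.diagonal σ * Vmᵀ :=
  stmt_1_general V m d piv p lam hlam W H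
end
end

section
/- In the symmetric setting, assume d ≥ V−1, let S̃ = UΣVᵀ be a singular value decomposition of S̃ (U ∈ ℝ^{V×(V−1)}, V ∈ ℝ^{m×(V−1)} with orthonormal columns, Σ ∈ ℝ^{(V−1)×(V−1)} diagonal positive), and define the limiting embedding matrices W := UΣ^{1/2}R ∈ ℝ^{V×d} and H := RᵀΣ^{1/2}Vᵀ ∈ ℝ^{d×m} for any R ∈ ℝ^{(V−1)×d} with RRᵀ = I_{V−1}. Writing w_v for the rows of W and h_j for the columns of H: (a) all word embeddings are equinorm with ‖w_v‖² = (1 − 1/V)·√C(V−2,k−1), and cos(w_v, w_{v′}) = −1/(V−1) for all v ≠ v′ (the word embeddings form an equiangular tight frame); (b) all context embeddings are equinorm with ‖h_j‖² = (k − k²/V)/√C(V−2,k−1), and cos(h_j, h_{j′}) = (|S_j ∩ S_{j′}| − k²/V)/(k − k²/V) for all j ≠ j′; (c) consequently ‖w_v‖²/‖h_j‖² = (V−1)·C(V−2,k−1)/(k(V−k)) for all v and j. -/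
open Filter Topology Matrix

noncomputable section

/-- The (0/1) support matrix of a family of support sets. -/
def Smat {V m : ℕ} (Ssets : Fin m → Finset (Fin V)) : Matrix (Fin V) (Fin m) ℝ :=
  Matrix.of fun z j => if z ∈ Ssets j then (1 : ℝ) else 0

/-- The centered support matrix `S̃ = (I_V − (1/V) 1 1ᵀ) S`. -/
def Stil {V m : ℕ} (Ssets : Fin m → Finset (Fin V)) : Matrix (Fin V) (Fin m) ℝ :=
  ((1 : Matrix (Fin V) (Fin V) ℝ) - (V : ℝ)⁻¹ • Matrix.of fun _ _ => (1 : ℝ)) * Smat Ssets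

/-- Euclidean norm of a vector. -/
def vecNorm {n : ℕ} (v : Fin n → ℝ) : ℝ := Real.sqrt (∑ i, v i ^ 2)

/-- Euclidean dot product of vectors. -/
def dotp {n : ℕ} (a b : Fin n → ℝ) : ℝ := ∑ i, a i * b i

/-- Cosine similarity of two vectors. -/
def cosSim {n : ℕ} (a b : Fin n → ℝ) : ℝ := dotp a b / (vecNorm a * vecNorm b)

/-!
A word lies in `C(V-1,k-1)` of the supports, and `C(V-2,k-1)` of these miss any other given word,
so `S Sᵀ = β 𝟙𝟙ᵀ + C(V-2,k-1) I`. Centering kills the rank-one part: `S̃ S̃ᵀ = C(V-2,k-1) P` with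
`P = I - 𝟙𝟙ᵀ/V` idempotent. In the SVD this reads `U Σ² Uᵀ = C(V-2,k-1) P`; squaring and
conjugating by `U` forces every singular value to be `√C(V-2,k-1)`, and then `U Uᵀ = P`. Hence
`W Wᵀ = U Σ Uᵀ` is a multiple of `P` and `Hᵀ H = V Σ Vᵀ = S̃ᵀ S̃ / √C(V-2,k-1)`, whose entries are
`|S_j ∩ S_j'| - k²/V`; all norms and cosines are read off these two Gram matrices.
-/

open Finset

theorem card_filter_powersetCard_subset_disjoint {α : Type*} [Fintype α] [DecidableEq α]
    {k : ℕ} {t u : Finset α} (htu : Disjoint t u) (ht : #t ≤ k) :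
    #{s ∈ powersetCard k univ | t ⊆ s ∧ Disjoint s u} =
      (Fintype.card α - #t - #u).choose (k - #t) := by
  rw [Nat.sub_sub, ← card_union_of_disjoint htu, ← card_compl, ← card_powersetCard]
  -- `s ↦ s \ t` is a bijection onto the `(k - #t)`-subsets of `(t ∪ u)ᶜ`
  refine card_nbij' (· \ t) (· ∪ t) (fun s hs => ?_) (fun s hs => ?_) (fun s hs => ?_)
    (fun s hs => ?_) <;>
  simp only [mem_coe, mem_filter, mem_powersetCard, subset_univ, true_and,
    subset_compl_iff_disjoint_right, disjoint_union_right] at hs ⊢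
  · refine ⟨⟨disjoint_sdiff_self_left, ?_⟩, by rw [card_sdiff_of_subset hs.2.1, hs.1]⟩
    exact disjoint_of_subset_left sdiff_subset hs.2.2
  · exact ⟨by rw [card_union_of_disjoint hs.1.1, hs.2, Nat.sub_add_cancel ht],
      subset_union_right, disjoint_union_left.mpr ⟨hs.1.2, htu⟩⟩
  · exact sdiff_union_of_subset hs.2.1
  · exact union_sdiff_cancel_right hs.1.1

theorem card_filter_comp_eq_card_filter_powersetCard {α : Type*} [Fintype α] {m k : ℕ}
    {Ssets : Fin m → Finset α} (hcard : ∀ j, #(Ssets j) = k)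
    (hinj : Function.Injective Ssets) (hsurj : ∀ s : Finset α, #s = k → ∃ j, Ssets j = s)
    (p : Finset α → Prop) [DecidablePred p] :
    #{j | p (Ssets j)} = #{s ∈ powersetCard k univ | p s} := by
  refine card_nbij Ssets (fun j hj => ?_) hinj.injOn (fun s hs => ?_)
  · simp_all
  · obtain ⟨j, rfl⟩ := hsurj s (by simp_all)
    exact ⟨j, by simp_all⟩

def centering (n : Type*) [Fintype n] [DecidableEq n] : Matrix n n ℝ :=
  1 - (Fintype.card n : ℝ)⁻¹ • of fun _ _ => 1

section Centering

variable {n : Type*} [Fintype n] [DecidableEq n]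

theorem centering_apply (i j : n) :
    centering n i j = (if i = j then 1 else 0) - (Fintype.card n : ℝ)⁻¹ := by
  simp [centering, one_apply]

theorem centering_transpose : (centering n)ᵀ = centering n := by
  ext i j
  simp [centering_apply, eq_comm]

theorem centering_mul_ones [Nonempty n] : centering n * of (fun _ _ => (1 : ℝ)) = 0 := by
  ext i j
  simp [mul_apply, centering_apply, sum_sub_distrib]

theorem centering_mul_self [Nonempty n] : centering n * centering n = centering n := by
  nth_rw 2 [centering]
  rw [mul_sub, Matrix.mul_smul, centering_mul_ones, smul_zero, sub_zero, mul_one]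

end Centering

section SupportMatrix

variable {V m : ℕ} (Ssets : Fin m → Finset (Fin V))

theorem smat_mul_transpose_apply (v v' : Fin V) :
    (Smat Ssets * (Smat Ssets)ᵀ) v v' = #{j | v ∈ Ssets j ∧ v' ∈ Ssets j} := by
  simp only [mul_apply, Smat, transpose_apply, of_apply, ite_mul, one_mul, zero_mul, ← ite_and]
  rw [sum_boole]

theorem smat_transpose_mul_apply (j j' : Fin m) :
    ((Smat Ssets)ᵀ * Smat Ssets) j j' = #(Ssets j ∩ Ssets j') := by
  simp only [mul_apply, Smat, transpose_apply, of_apply, ite_mul, one_mul, zero_mul, ← ite_and]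
  rw [sum_boole, filter_and, filter_mem_eq_inter, filter_mem_eq_inter, univ_inter, univ_inter]

theorem ones_mul_smat :
    (of fun _ _ => 1 : Matrix (Fin V) (Fin V) ℝ) * Smat Ssets =
      of fun _ j => (#(Ssets j) : ℝ) := by
  ext z j
  simp [mul_apply, Smat]

theorem stil_eq_centering_mul : Stil Ssets = centering (Fin V) * Smat Ssets := by
  rw [Stil, centering, Fintype.card_fin]

theorem stil_transpose_mul_apply [NeZero V] (j j' : Fin m) :
    ((Stil Ssets)ᵀ * Stil Ssets) j j' =
      #(Ssets j ∩ Ssets j') - (#(Ssets j) * #(Ssets j') : ℝ) / V := by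
  have hgram : (Stil Ssets)ᵀ * Stil Ssets = (Smat Ssets)ᵀ * Smat Ssets - (V : ℝ)⁻¹ •
      ((Smat Ssets)ᵀ * ((of fun _ _ => 1 : Matrix (Fin V) (Fin V) ℝ) * Smat Ssets)) := by
    rw [stil_eq_centering_mul, transpose_mul, centering_transpose, Matrix.mul_assoc,
      ← Matrix.mul_assoc (centering _), centering_mul_self, centering, Matrix.sub_mul,
      Matrix.smul_mul, Matrix.mul_sub, Matrix.mul_smul, Matrix.one_mul, Fintype.card_fin]
  rw [hgram, Matrix.sub_apply, Matrix.smul_apply, smat_transpose_mul_apply, ones_mul_smat,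
    mul_apply]
  simp only [Smat, transpose_apply, of_apply, ite_mul, one_mul, zero_mul, sum_ite_mem, univ_inter,
    sum_const, nsmul_eq_mul, smul_eq_mul]
  ring

variable {Ssets} {k : ℕ}

theorem smat_mul_transpose_of_enum (hk : 1 ≤ k) (hcard : ∀ j, #(Ssets j) = k)
    (hinj : Function.Injective Ssets)
    (hsurj : ∀ s : Finset (Fin V), #s = k → ∃ j, Ssets j = s) :
    Smat Ssets * (Smat Ssets)ᵀ =
      (((V - 1).choose (k - 1) : ℝ) - (V - 2).choose (k - 1)) • of (fun _ _ => (1 : ℝ)) +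
        ((V - 2).choose (k - 1) : ℝ) • 1 := by
  have hcount := card_filter_comp_eq_card_filter_powersetCard hcard hinj hsurj
  have hk' (v : Fin V) : #{v} ≤ k := by simpa using hk
  have hmem (v : Fin V) : #{j | v ∈ Ssets j} = (V - 1).choose (k - 1) := by
    refine (hcount (v ∈ ·)).trans ?_
    convert card_filter_powersetCard_subset_disjoint (disjoint_empty_right {v}) (hk' v)
      using 2 <;> simp
  have hmem_notMem {v v' : Fin V} (h : v ≠ v') :
      #{j | v ∈ Ssets j ∧ v' ∉ Ssets j} = (V - 2).choose (k - 1) := by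
    refine (hcount (fun s => v ∈ s ∧ v' ∉ s)).trans ?_
    convert card_filter_powersetCard_subset_disjoint (disjoint_singleton.mpr h) (hk' v)
      using 2 <;> simp [Nat.sub_sub]
  ext v v'
  rw [smat_mul_transpose_apply]
  by_cases h : v = v'
  · subst h
    simp [hmem]
  · have hsplit := card_filter_add_card_filter_not (s := {j | v ∈ Ssets j}) (v' ∈ Ssets ·)
    simp only [filter_filter, hmem, hmem_notMem h] at hsplit
    simp [h, ← hsplit]

theorem stil_mul_transpose_of_enum [NeZero V] (hk : 1 ≤ k) (hcard : ∀ j, #(Ssets j) = k)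
    (hinj : Function.Injective Ssets)
    (hsurj : ∀ s : Finset (Fin V), #s = k → ∃ j, Ssets j = s) :
    Stil Ssets * (Stil Ssets)ᵀ = ((V - 2).choose (k - 1) : ℝ) • centering (Fin V) := by
  rw [stil_eq_centering_mul, transpose_mul, centering_transpose, Matrix.mul_assoc,
    ← Matrix.mul_assoc (Smat Ssets), smat_mul_transpose_of_enum hk hcard hinj hsurj, add_mul,
    mul_add, Matrix.smul_mul, Matrix.mul_smul, ← Matrix.mul_assoc, centering_mul_ones, zero_mul,
    smul_zero, zero_add, Matrix.smul_mul, one_mul, Matrix.mul_smul, centering_mul_self]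

end SupportMatrix

section Diagonal

variable {ι κ r α : Type*} [Fintype r] [DecidableEq r] [CommRing α]

theorem transpose_mul_diagonal_mul (A : Matrix ι r α) (d : r → α) (B : Matrix r κ α) :
    (A * diagonal d * B)ᵀ = Bᵀ * diagonal d * Aᵀ := by
  simp only [transpose_mul, diagonal_transpose, Matrix.mul_assoc]

theorem mul_diagonal_mul_mul_transpose [Fintype κ] (A : Matrix ι r α) (d : r → α)
    {R : Matrix r κ α} (hR : R * Rᵀ = 1) :
    A * diagonal d * R * (A * diagonal d * R)ᵀ = A * diagonal (fun i => d i ^ 2) * Aᵀ := by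
  rw [transpose_mul_diagonal_mul]
  simp only [Matrix.mul_assoc]
  rw [← Matrix.mul_assoc R, hR, Matrix.one_mul, ← Matrix.mul_assoc (diagonal d),
    diagonal_mul_diagonal]
  simp only [sq]

theorem mul_diagonal_const_mul_transpose (A : Matrix ι r α) (a : α) :
    A * diagonal (fun _ : r => a) * Aᵀ = a • (A * Aᵀ) := by
  rw [← smul_one_eq_diagonal, Matrix.mul_smul, Matrix.mul_one, Matrix.smul_mul]

theorem eq_of_conj_diagonal_mul_self_eq_smul [Fintype ι] [IsDomain α] {U : Matrix ι r α}
    (hU : Uᵀ * U = 1) {d : r → α} (hd : ∀ i, d i ≠ 0) {c : α}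
    (h : U * diagonal d * Uᵀ * (U * diagonal d * Uᵀ) = c • (U * diagonal d * Uᵀ)) (i : r) :
    d i = c := by
  have hconj (D : Matrix r r α) : Uᵀ * (U * D * Uᵀ) * U = D := by
    simp only [← Matrix.mul_assoc, hU, Matrix.one_mul]
    rw [Matrix.mul_assoc, hU, Matrix.mul_one]
  have hsq : U * diagonal d * Uᵀ * (U * diagonal d * Uᵀ) = U * diagonal (d * d) * Uᵀ := by
    simp only [Matrix.mul_assoc]
    rw [← Matrix.mul_assoc Uᵀ, hU, Matrix.one_mul, ← Matrix.mul_assoc (diagonal d),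
      diagonal_mul_diagonal]
    rfl
  have := congrArg (fun M => (Uᵀ * M * U) i i) h
  simp only [hsq, hconj, Matrix.mul_smul, Matrix.smul_mul, Matrix.smul_apply, diagonal_apply_eq,
    Pi.mul_apply, smul_eq_mul] at this
  exact mul_right_cancel₀ (hd i) this

end Diagonal

section SVD

variable {ι κ r τ : Type*} [Fintype r] [DecidableEq r]
  {U : Matrix ι r ℝ} {Vm : Matrix κ r ℝ} {σ : r → ℝ}

theorem mul_diagonal_sqrt_mul_mul_transpose [Fintype τ] (hσ : ∀ i, 0 ≤ σ i)
    {R : Matrix r τ ℝ} (hR : R * Rᵀ = 1) :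
    U * diagonal (fun i => √(σ i)) * R * (U * diagonal (fun i => √(σ i)) * R)ᵀ =
      U * diagonal σ * Uᵀ := by
  simp only [mul_diagonal_mul_mul_transpose U _ hR, Real.sq_sqrt (hσ _)]

theorem svd_transpose_mul_self [Fintype ι] (hU : Uᵀ * U = 1) :
    (U * diagonal σ * Vmᵀ)ᵀ * (U * diagonal σ * Vmᵀ) =
      Vm * diagonal (fun i => σ i ^ 2) * Vmᵀ := by
  rw [transpose_mul_diagonal_mul, transpose_transpose, ← mul_diagonal_mul_mul_transpose Vm σ
    (by rwa [transpose_transpose]), transpose_mul_diagonal_mul, transpose_transpose]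

theorem transpose_mul_self_of_const_svd [Fintype ι] [Fintype τ] (hU : Uᵀ * U = 1) {s : ℝ}
    (hs : 0 < s) (hσ : ∀ i, σ i = s) {R : Matrix r τ ℝ} (hR : R * Rᵀ = 1) :
    (Rᵀ * diagonal (fun i => √(σ i)) * Vmᵀ)ᵀ *
        (Rᵀ * diagonal (fun i => √(σ i)) * Vmᵀ) =
      s⁻¹ • ((U * diagonal σ * Vmᵀ)ᵀ * (U * diagonal σ * Vmᵀ)) := by
  have hVm := mul_diagonal_sqrt_mul_mul_transpose (U := Vm) (fun i => (hσ i).symm ▸ hs.le) hR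
  have hStS := svd_transpose_mul_self (σ := σ) (Vm := Vm) hU
  simp only [transpose_mul_diagonal_mul, transpose_transpose] at hVm hStS ⊢
  rw [hVm, hStS, funext hσ, mul_diagonal_const_mul_transpose, mul_diagonal_const_mul_transpose,
    smul_smul, sq, inv_mul_cancel_left₀ hs.ne']

variable [Fintype ι] [Fintype κ] {P : Matrix ι ι ℝ} {c : ℝ}

theorem svd_sq_eq_of_mul_transpose_eq_smul (hP : P * P = P) (hU : Uᵀ * U = 1)
    (hVm : Vmᵀ * Vm = 1) (hσ : ∀ i, σ i ≠ 0)
    (h : U * diagonal σ * Vmᵀ * (U * diagonal σ * Vmᵀ)ᵀ = c • P) (i : r) :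
    σ i ^ 2 = c := by
  rw [mul_diagonal_mul_mul_transpose U σ (by rwa [transpose_transpose])] at h
  refine eq_of_conj_diagonal_mul_self_eq_smul hU (fun i => pow_ne_zero 2 (hσ i)) ?_ i
  rw [h, Matrix.smul_mul, Matrix.mul_smul, hP]

theorem svd_mul_transpose_left_eq (hc : c ≠ 0) (hVm : Vmᵀ * Vm = 1) (hσ : ∀ i, σ i ^ 2 = c)
    (h : U * diagonal σ * Vmᵀ * (U * diagonal σ * Vmᵀ)ᵀ = c • P) : U * Uᵀ = P := by
  rw [mul_diagonal_mul_mul_transpose U σ (by rwa [transpose_transpose]), funext hσ,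
    mul_diagonal_const_mul_transpose] at h
  exact smul_right_injective _ hc h

end SVD

section Gram

variable {ι : Type*} {n : ℕ}

theorem vecNorm_sq_eq_dotp (a : Fin n → ℝ) : vecNorm a ^ 2 = dotp a a := by
  rw [vecNorm, Real.sq_sqrt (by positivity), dotp]
  simp only [sq]

theorem dotp_eq_mul_transpose_apply (A : Matrix ι (Fin n) ℝ) (i i' : ι) :
    dotp (A i) (A i') = (A * Aᵀ) i i' := by
  simp [dotp, mul_apply]

theorem vecNorm_sq_eq_mul_transpose_apply (A : Matrix ι (Fin n) ℝ) (i : ι) :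
    vecNorm (A i) ^ 2 = (A * Aᵀ) i i := by
  rw [vecNorm_sq_eq_dotp, dotp_eq_mul_transpose_apply]

theorem cosSim_eq_of_vecNorm_sq_eq {a b : Fin n → ℝ} {x : ℝ} (ha : vecNorm a ^ 2 = x)
    (hb : vecNorm b ^ 2 = x) : cosSim a b = dotp a b / x := by
  have hab : vecNorm a = vecNorm b :=
    (pow_left_inj₀ (Real.sqrt_nonneg _) (Real.sqrt_nonneg _) two_ne_zero).mp (ha.trans hb.symm)
  rw [cosSim, ← hab, ← sq, ha]

theorem cosSim_eq_of_mul_transpose_eq_smul {A : Matrix ι (Fin n) ℝ} {G : Matrix ι ι ℝ}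
    {a : ℝ} (ha : a ≠ 0) (hA : A * Aᵀ = a • G) {i i' : ι} (hG : G i' i' = G i i) :
    cosSim (A i) (A i') = G i i' / G i i := by
  have hnorm (l : ι) : vecNorm (A l) ^ 2 = a * G l l := by
    rw [vecNorm_sq_eq_mul_transpose_apply, hA, Matrix.smul_apply, smul_eq_mul]
  rw [cosSim_eq_of_vecNorm_sq_eq (hnorm i) (hG ▸ hnorm i'), dotp_eq_mul_transpose_apply, hA,
    Matrix.smul_apply, smul_eq_mul, mul_div_mul_left _ _ ha]

theorem cosSim_of_mul_transpose_eq_smul_centering {V : ℕ} {A : Matrix (Fin V) (Fin n) ℝ}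
    {s : ℝ} (hs : s ≠ 0) (hA : A * Aᵀ = s • centering (Fin V)) {v v' : Fin V}
    (h : v ≠ v') :
    cosSim (A v) (A v') = -1 / ((V : ℝ) - 1) := by
  have hV : (V : ℝ) ≠ 0 := Nat.cast_ne_zero.mpr v.pos.ne'
  rw [cosSim_eq_of_mul_transpose_eq_smul hs hA (by simp [centering_apply]), centering_apply,
    centering_apply, if_neg h, if_pos rfl, Fintype.card_fin]
  field_simp
  ring

end Gram

theorem stmt_8_general (V k d : ℕ) (hk1 : 1 ≤ k) (hkV : k < V)
    (m : ℕ)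
    (Ssets : Fin m → Finset (Fin V))
    (hcard : ∀ j, (Ssets j).card = k)
    (hinj : Function.Injective Ssets)
    (hsurj : ∀ s : Finset (Fin V), s.card = k → ∃ j, Ssets j = s)
    (U : Matrix (Fin V) (Fin (V - 1)) ℝ) (Vm : Matrix (Fin m) (Fin (V - 1)) ℝ)
    (σ : Fin (V - 1) → ℝ)
    (hU : Uᵀ * U = 1) (hVm : Vmᵀ * Vm = 1) (hσ : ∀ i, 0 < σ i)
    (hSVD : Stil Ssets = U * Matrix.diagonal σ * Vmᵀ)
    (R : Matrix (Fin (V - 1)) (Fin d) ℝ) (hR : R * Rᵀ = 1)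
    (W : Matrix (Fin V) (Fin d) ℝ)
    (hW : W = U * Matrix.diagonal (fun i => Real.sqrt (σ i)) * R)
    (H : Matrix (Fin d) (Fin m) ℝ)
    (hH : H = Rᵀ * Matrix.diagonal (fun i => Real.sqrt (σ i)) * Vmᵀ) :
    -- (a) word embeddings form an equiangular tight frame
    (∀ v : Fin V,
        vecNorm (W v) ^ 2 = (1 - 1 / (V : ℝ)) * Real.sqrt (Nat.choose (V - 2) (k - 1))) ∧
    (∀ v v' : Fin V, v ≠ v' → cosSim (W v) (W v') = -1 / ((V : ℝ) - 1)) ∧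
    -- (b) context embeddings: norms and cosine similarities
    (∀ j : Fin m,
        vecNorm (fun t => H t j) ^ 2 =
          ((k : ℝ) - (k : ℝ) ^ 2 / (V : ℝ)) / Real.sqrt (Nat.choose (V - 2) (k - 1))) ∧
    (∀ j j' : Fin m, j ≠ j' →
        cosSim (fun t => H t j) (fun t => H t j') =
          (((Ssets j ∩ Ssets j').card : ℝ) - (k : ℝ) ^ 2 / (V : ℝ)) /
            ((k : ℝ) - (k : ℝ) ^ 2 / (V : ℝ))) ∧
    -- (c) norm ratio
    (∀ (v : Fin V) (j : Fin m),
        vecNorm (W v) ^ 2 / vecNorm (fun t => H t j) ^ 2 =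
          ((V : ℝ) - 1) * (Nat.choose (V - 2) (k - 1) : ℝ) /
            ((k : ℝ) * ((V : ℝ) - (k : ℝ)))) := by
  have : NeZero V := ⟨by omega⟩
  set c : ℝ := ↑((V - 2).choose (k - 1))
  have hc0 : 0 < c := Nat.cast_pos.mpr (Nat.choose_pos (by omega))
  have hSSt : Stil Ssets * (Stil Ssets)ᵀ = c • centering (Fin V) :=
    stil_mul_transpose_of_enum hk1 hcard hinj hsurj
  rw [hSVD] at hSSt
  have hσ_sq := svd_sq_eq_of_mul_transpose_eq_smul centering_mul_self hU hVm (fun i => (hσ i).ne')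
    hSSt
  have hsqrt_c : 0 < √c := Real.sqrt_pos.mpr hc0
  have hσ_eq : σ = fun _ => √c := funext fun i => by rw [← hσ_sq i, Real.sqrt_sq (hσ i).le]
  have hWWt : W * Wᵀ = √c • centering (Fin V) := by
    rw [hW, mul_diagonal_sqrt_mul_mul_transpose (fun i => (hσ i).le) hR, hσ_eq,
      mul_diagonal_const_mul_transpose, svd_mul_transpose_left_eq hc0.ne' hVm hσ_sq hSSt]
  have hHtH : Hᵀ * Hᵀᵀ = (√c)⁻¹ • ((Stil Ssets)ᵀ * Stil Ssets) := by
    rw [transpose_transpose, hH, hSVD]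
    exact transpose_mul_self_of_const_svd hU hsqrt_c (congrFun hσ_eq) hR
  have hStS (j j' : Fin m) : ((Stil Ssets)ᵀ * Stil Ssets) j j' =
      #(Ssets j ∩ Ssets j') - (k : ℝ) ^ 2 / V := by
    rw [stil_transpose_mul_apply, hcard, hcard, sq]
  have hV0 : (V : ℝ) ≠ 0 := by norm_cast; omega
  have hk0 : (k : ℝ) ≠ 0 := by norm_cast; omega
  have hVk : (V : ℝ) - k ≠ 0 := sub_ne_zero.mpr (by norm_cast; omega)
  have hcol (j : Fin m) : (fun t => H t j) = Hᵀ j := rfl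
  simp only [hcol, vecNorm_sq_eq_mul_transpose_apply, hWWt, hHtH, Matrix.smul_apply, hStS,
    centering_apply, Fintype.card_fin, smul_eq_mul, if_true, inter_self, hcard]
  refine ⟨fun v => by ring, fun v v' hvv' => ?_, fun j => by ring, fun j j' _ => ?_,
    fun v j => ?_⟩
  · exact cosSim_of_mul_transpose_eq_smul_centering hsqrt_c.ne' hWWt hvv'
  · rw [cosSim_eq_of_mul_transpose_eq_smul (inv_ne_zero hsqrt_c.ne') hHtH (by simp [hStS, hcard]),
      hStS, hStS, inter_self, hcard]
  · field_simp
    rw [Real.sq_sqrt hc0.le]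
    ring

/-- in the symmetric setting with `d ≥ V − 1`, the limiting embeddings
`W = UΣ^{1/2}R`, `H = RᵀΣ^{1/2}Vᵀ` built from an SVD `S̃ = UΣVᵀ` satisfy:
(a) the word embeddings form an equiangular tight frame with the stated norms and angles;
(b) the context embeddings are equinorm with the stated norms and cosine similarities;
(c) the stated norm ratio holds. -/
theorem stmt_8 (V k d : ℕ) (hV : 2 ≤ V) (hk1 : 1 ≤ k) (hkV : k < V)
    (m : ℕ) (hm : m = Nat.choose V k)
    (Ssets : Fin m → Finset (Fin V))
    (hcard : ∀ j, (Ssets j).card = k)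
    (hinj : Function.Injective Ssets)
    (hsurj : ∀ s : Finset (Fin V), s.card = k → ∃ j, Ssets j = s)
    (hd : V - 1 ≤ d)
    (U : Matrix (Fin V) (Fin (V - 1)) ℝ) (Vm : Matrix (Fin m) (Fin (V - 1)) ℝ)
    (σ : Fin (V - 1) → ℝ)
    (hU : Uᵀ * U = 1) (hVm : Vmᵀ * Vm = 1) (hσ : ∀ i, 0 < σ i)
    (hSVD : Stil Ssets = U * Matrix.diagonal σ * Vmᵀ)
    (R : Matrix (Fin (V - 1)) (Fin d) ℝ) (hR : R * Rᵀ = 1)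
    (W : Matrix (Fin V) (Fin d) ℝ)
    (hW : W = U * Matrix.diagonal (fun i => Real.sqrt (σ i)) * R)
    (H : Matrix (Fin d) (Fin m) ℝ)
    (hH : H = Rᵀ * Matrix.diagonal (fun i => Real.sqrt (σ i)) * Vmᵀ) :
    -- (a) word embeddings form an equiangular tight frame
    (∀ v : Fin V,
        vecNorm (W v) ^ 2 = (1 - 1 / (V : ℝ)) * Real.sqrt (Nat.choose (V - 2) (k - 1))) ∧
    (∀ v v' : Fin V, v ≠ v' → cosSim (W v) (W v') = -1 / ((V : ℝ) - 1)) ∧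
    -- (b) context embeddings: norms and cosine similarities
    (∀ j : Fin m,
        vecNorm (fun t => H t j) ^ 2 =
          ((k : ℝ) - (k : ℝ) ^ 2 / (V : ℝ)) / Real.sqrt (Nat.choose (V - 2) (k - 1))) ∧
    (∀ j j' : Fin m, j ≠ j' →
        cosSim (fun t => H t j) (fun t => H t j') =
          (((Ssets j ∩ Ssets j').card : ℝ) - (k : ℝ) ^ 2 / (V : ℝ)) /
            ((k : ℝ) - (k : ℝ) ^ 2 / (V : ℝ))) ∧
    -- (c) norm ratio
    (∀ (v : Fin V) (j : Fin m),
        vecNorm (W v) ^ 2 / vecNorm (fun t => H t j) ^ 2 =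
          ((V : ℝ) - 1) * (Nat.choose (V - 2) (k - 1) : ℝ) /
            ((k : ℝ) * ((V : ℝ) - (k : ℝ)))) :=
  stmt_8_general V k d hk1 hkV m Ssets hcard hinj hsurj U Vm σ hU hVm hσ hSVD R hR W hW H hH
end
end

section
/- Suppose two contexts j ≠ j′ ∈ {1,…,m} have identical support sets, S_j = S_{j′}. If L^mm is any minimizer of the NTP-SVM program, then the matrix obtained from L^mm by replacing both its j-th and j′-th columns with the average (ℓ_j + ℓ_{j′})/2 of those two columns is also a minimizer of the NTP-SVM program; in particular, there exists a minimizer of NTP-SVM whose j-th and j′-th columns are equal. -/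
open Filter Topology Matrix

noncomputable section

/-- Feasibility for the NTP-SVM program with support sets `Ssets`. -/
def svmFeasibleS {V m : ℕ} (Ssets : Fin m → Finset (Fin V))
    (L : Matrix (Fin V) (Fin m) ℝ) : Prop :=
  (∀ j, ∀ z ∈ Ssets j, ∀ z' ∈ Ssets j, L z j = L z' j) ∧
  (∀ j, ∀ z ∈ Ssets j, ∀ v, v ∉ Ssets j → 1 ≤ L z j - L v j)

/-! The nuclear norm is the support function of the unit ball of contractions:
`trace (Xᴴ * A) ≤ nuclearNorm A` for every contraction `X`, with equality for
`X = A * (Aᴴ * A)^(-1/2)` (pseudo-inverse square root, read off the spectral decomposition of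
`Aᴴ * A`). Hence the nuclear norm is convex and invariant under right multiplication by orthogonal
matrices, in particular under permutations of the columns. Since `S j = S j'`, swapping columns
`j` and `j'` of a minimizer gives a feasible matrix of the same nuclear norm; the feasible set is
convex, so the midpoint of the two is feasible and its nuclear norm is at most the optimum. -/

open Unitary

namespace Matrix

variable {m n : Type*} [Fintype m] [Fintype n]

def IsContraction (X : Matrix m n ℝ) : Prop :=
  ∀ w : n → ℝ, X *ᵥ w ⬝ᵥ X *ᵥ w ≤ w ⬝ᵥ w

lemma mulVec_dotProduct_mulVec_self (X : Matrix m n ℝ) (w : n → ℝ) :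
    X *ᵥ w ⬝ᵥ X *ᵥ w = w ⬝ᵥ (Xᴴ * X) *ᵥ w := by
  rw [conjTranspose_eq_transpose_of_trivial, ← mulVec_mulVec, dotProduct_mulVec w,
    vecMul_transpose]

lemma dotProduct_le_sqrt_mul_sqrt (x y : n → ℝ) : x ⬝ᵥ y ≤ √(x ⬝ᵥ x) * √(y ⬝ᵥ y) := by
  simpa [dotProduct, sq] using Real.sum_mul_le_sqrt_mul_sqrt Finset.univ x y

variable [DecidableEq n]

lemma unitary_mulVec_dotProduct_self (u : unitaryGroup n ℝ) (w : n → ℝ) :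
    (u : Matrix n n ℝ) *ᵥ w ⬝ᵥ (u : Matrix n n ℝ) *ᵥ w = w ⬝ᵥ w := by
  rw [mulVec_dotProduct_mulVec_self, ← star_eq_conjTranspose, coe_star_mul_self, one_mulVec]

lemma IsContraction.mul_unitary {X : Matrix m n ℝ} (hX : X.IsContraction)
    (u : unitaryGroup n ℝ) : (X * (u : Matrix n n ℝ)).IsContraction := fun w => by
  rw [← mulVec_mulVec]
  exact (hX _).trans_eq (unitary_mulVec_dotProduct_self u w)

lemma isContraction_of_conjTranspose_mul_self_eq {X : Matrix m n ℝ} (u : unitaryGroup n ℝ)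
    {d : n → ℝ} (hd : ∀ i, d i ≤ 1)
    (hX : Xᴴ * X = conjStarAlgAut ℝ _ u (diagonal d)) : X.IsContraction := by
  intro w
  set t := ((star u : unitaryGroup n ℝ) : Matrix n n ℝ) *ᵥ w
  calc X *ᵥ w ⬝ᵥ X *ᵥ w = t ⬝ᵥ diagonal d *ᵥ t := by
        rw [mulVec_dotProduct_mulVec_self, hX, conjStarAlgAut_apply, ← mulVec_mulVec,
          ← mulVec_mulVec, dotProduct_mulVec]
        simp only [t, coe_star, star_eq_conjTranspose, conjTranspose_eq_transpose_of_trivial,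
          mulVec_transpose]
    _ ≤ t ⬝ᵥ t := by
        simp only [dotProduct, mulVec_diagonal]
        exact Finset.sum_le_sum fun i _ => by nlinarith [hd i, mul_self_nonneg (t i)]
    _ = w ⬝ᵥ w := unitary_mulVec_dotProduct_self (star u) w

lemma trace_conjStarAlgAut {R : Type*} [CommRing R] [StarRing R] (u : unitaryGroup n R)
    (M : Matrix n n R) : trace (conjStarAlgAut R _ u M) = trace M := by
  rw [conjStarAlgAut_apply, trace_mul_cycle, coe_star_mul_self, one_mul]

lemma trace_conjTranspose_mul_eq_sum (X A : Matrix m n ℝ) (u : unitaryGroup n ℝ) :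
    trace (Xᴴ * A) = ∑ i, X *ᵥ col (u : Matrix n n ℝ) i ⬝ᵥ A *ᵥ col (u : Matrix n n ℝ) i := by
  have : star (u : Matrix n n ℝ) * (Xᴴ * A) * (u : Matrix n n ℝ) =
      (X * (u : Matrix n n ℝ))ᴴ * (A * (u : Matrix n n ℝ)) := by
    simp only [conjTranspose_mul, star_eq_conjTranspose, Matrix.mul_assoc]
  rw [← trace_conjStarAlgAut (star u), conjStarAlgAut_apply, coe_star, star_star, this]
  rfl

lemma IsHermitian.spectral_theorem_real {M : Matrix n n ℝ} (hM : M.IsHermitian) :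
    M = conjStarAlgAut ℝ _ hM.eigenvectorUnitary (diagonal hM.eigenvalues) := by
  simpa [RCLike.ofReal_real_eq_id] using hM.spectral_theorem

lemma permMatrix_mem_unitaryGroup {R : Type*} [CommRing R] [StarRing R] (σ : Equiv.Perm n) :
    σ.permMatrix R ∈ unitaryGroup n R := by
  rw [mem_unitaryGroup_iff, star_eq_conjTranspose, conjTranspose_permMatrix, ← permMatrix_mul,
    inv_mul_cancel, permMatrix_one]

variable {A : Matrix m n ℝ} {u : unitaryGroup n ℝ} {d : n → ℝ}

lemma conjTranspose_mul_self_mul_unitary (h : Aᴴ * A = conjStarAlgAut ℝ _ u (diagonal d)) :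
    (A * (u : Matrix n n ℝ))ᴴ * (A * (u : Matrix n n ℝ)) = diagonal d := by
  rw [conjTranspose_mul, Matrix.mul_assoc, ← Matrix.mul_assoc Aᴴ, h, conjStarAlgAut_apply,
    ← star_eq_conjTranspose]
  simp only [Matrix.mul_assoc, coe_star_mul_self, Matrix.mul_one]
  rw [← Matrix.mul_assoc, coe_star_mul_self, Matrix.one_mul]

theorem trace_conjTranspose_mul_le_sum_sqrt {X : Matrix m n ℝ} (hX : X.IsContraction)
    (h : Aᴴ * A = conjStarAlgAut ℝ _ u (diagonal d)) : trace (Xᴴ * A) ≤ ∑ i, √(d i) := by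
  rw [trace_conjTranspose_mul_eq_sum X A u]
  refine Finset.sum_le_sum fun i _ => ?_
  rw [← mulVec_single_one]
  set v := (u : Matrix n n ℝ) *ᵥ Pi.single i 1
  have hv : v ⬝ᵥ v = 1 := by
    rw [unitary_mulVec_dotProduct_self]
    simp
  have hAv : A *ᵥ v ⬝ᵥ A *ᵥ v = d i := by
    rw [mulVec_mulVec, mulVec_dotProduct_mulVec_self, conjTranspose_mul_self_mul_unitary h]
    simp
  calc X *ᵥ v ⬝ᵥ A *ᵥ v ≤ √(X *ᵥ v ⬝ᵥ X *ᵥ v) * √(A *ᵥ v ⬝ᵥ A *ᵥ v) :=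
        dotProduct_le_sqrt_mul_sqrt _ _
    _ ≤ √(d i) := by
        rw [hAv]
        exact mul_le_of_le_one_left (Real.sqrt_nonneg _)
          (Real.sqrt_le_one.mpr ((hX v).trans hv.le))

theorem exists_isContraction_trace_eq_sum_sqrt
    (h : Aᴴ * A = conjStarAlgAut ℝ _ u (diagonal d)) :
    ∃ X : Matrix m n ℝ, X.IsContraction ∧ trace (Xᴴ * A) = ∑ i, √(d i) := by
  set φ := conjStarAlgAut ℝ (Matrix n n ℝ) u
  -- `(√0)⁻¹ = 0`, so `g i * d i = √(d i)` and `g i * d i * g i ≤ 1` need no case split.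
  set g : n → ℝ := fun i => (√(d i))⁻¹
  have hP : (φ (diagonal g))ᴴ = φ (diagonal g) := by
    rw [← star_eq_conjTranspose, ← map_star, star_eq_conjTranspose, diagonal_conjTranspose,
      star_trivial]
  refine ⟨A * φ (diagonal g), isContraction_of_conjTranspose_mul_self_eq u
      (d := fun i => g i * (d i * g i)) (fun i => ?_) ?_, ?_⟩
  · simp only [g, ← div_eq_inv_mul, Real.div_sqrt, ← div_eq_mul_inv]
    exact div_self_le_one _
  · rw [conjTranspose_mul, hP, Matrix.mul_assoc, ← Matrix.mul_assoc Aᴴ, h, ← map_mul,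
      ← map_mul, diagonal_mul_diagonal, diagonal_mul_diagonal]
  · rw [conjTranspose_mul, hP, Matrix.mul_assoc, h, ← map_mul, trace_conjStarAlgAut,
      diagonal_mul_diagonal, trace_diagonal]
    simp only [g, ← div_eq_inv_mul, Real.div_sqrt]

end Matrix

section NuclearNorm

variable {a b : ℕ}

theorem trace_conjTranspose_mul_le_nuclearNorm {X : Matrix (Fin a) (Fin b) ℝ}
    (hX : X.IsContraction) (A : Matrix (Fin a) (Fin b) ℝ) : trace (Xᴴ * A) ≤ nuclearNorm A :=
  trace_conjTranspose_mul_le_sum_sqrt hX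
    (isHermitian_conjTranspose_mul_self A).spectral_theorem_real

theorem exists_isContraction_trace_eq_nuclearNorm (A : Matrix (Fin a) (Fin b) ℝ) :
    ∃ X : Matrix (Fin a) (Fin b) ℝ, X.IsContraction ∧ trace (Xᴴ * A) = nuclearNorm A :=
  exists_isContraction_trace_eq_sum_sqrt
    (isHermitian_conjTranspose_mul_self A).spectral_theorem_real

theorem nuclearNorm_add_le (A B : Matrix (Fin a) (Fin b) ℝ) :
    nuclearNorm (A + B) ≤ nuclearNorm A + nuclearNorm B := by
  obtain ⟨X, hX, hXAB⟩ := exists_isContraction_trace_eq_nuclearNorm (A + B)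
  rw [← hXAB, Matrix.mul_add, trace_add]
  exact add_le_add (trace_conjTranspose_mul_le_nuclearNorm hX A)
    (trace_conjTranspose_mul_le_nuclearNorm hX B)

theorem nuclearNorm_smul {c : ℝ} (hc : 0 ≤ c) (A : Matrix (Fin a) (Fin b) ℝ) :
    nuclearNorm (c • A) = c * nuclearNorm A := by
  apply le_antisymm
  · obtain ⟨X, hX, hXA⟩ := exists_isContraction_trace_eq_nuclearNorm (c • A)
    rw [← hXA, Matrix.mul_smul, trace_smul, smul_eq_mul]
    exact mul_le_mul_of_nonneg_left (trace_conjTranspose_mul_le_nuclearNorm hX A) hc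
  · obtain ⟨X, hX, hXA⟩ := exists_isContraction_trace_eq_nuclearNorm A
    rw [← hXA, ← smul_eq_mul, ← trace_smul, ← Matrix.mul_smul]
    exact trace_conjTranspose_mul_le_nuclearNorm hX (c • A)

theorem convexOn_nuclearNorm :
    ConvexOn ℝ Set.univ (nuclearNorm : Matrix (Fin a) (Fin b) ℝ → ℝ) :=
  ⟨convex_univ, fun A _ B _ s t hs ht _ => by
    simpa only [nuclearNorm_smul hs, nuclearNorm_smul ht, smul_eq_mul] using
      nuclearNorm_add_le (s • A) (t • B)⟩

theorem nuclearNorm_mul_unitary_le (A : Matrix (Fin a) (Fin b) ℝ) (u : unitaryGroup (Fin b) ℝ) :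
    nuclearNorm (A * (u : Matrix (Fin b) (Fin b) ℝ)) ≤ nuclearNorm A := by
  obtain ⟨X, hX, hXA⟩ :=
    exists_isContraction_trace_eq_nuclearNorm (A * (u : Matrix (Fin b) (Fin b) ℝ))
  calc nuclearNorm (A * (u : Matrix (Fin b) (Fin b) ℝ))
      = trace ((X * ((star u : unitaryGroup (Fin b) ℝ) : Matrix (Fin b) (Fin b) ℝ))ᴴ * A) := by
        rw [← hXA, coe_star, conjTranspose_mul, star_eq_conjTranspose,
          conjTranspose_conjTranspose, ← Matrix.mul_assoc, trace_mul_cycle]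
    _ ≤ nuclearNorm A := trace_conjTranspose_mul_le_nuclearNorm (hX.mul_unitary (star u)) A

theorem nuclearNorm_mul_unitary (A : Matrix (Fin a) (Fin b) ℝ) (u : unitaryGroup (Fin b) ℝ) :
    nuclearNorm (A * (u : Matrix (Fin b) (Fin b) ℝ)) = nuclearNorm A := by
  refine le_antisymm (nuclearNorm_mul_unitary_le A u) ?_
  simpa [Matrix.mul_assoc] using
    nuclearNorm_mul_unitary_le (A * (u : Matrix (Fin b) (Fin b) ℝ)) (star u)

theorem nuclearNorm_submatrix_perm (A : Matrix (Fin a) (Fin b) ℝ) (σ : Equiv.Perm (Fin b)) :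
    nuclearNorm (A.submatrix id σ) = nuclearNorm A := by
  rw [← Equiv.symm_symm σ, ← PEquiv.mul_toMatrix_toPEquiv]
  exact nuclearNorm_mul_unitary A ⟨_, permMatrix_mem_unitaryGroup σ.symm⟩

end NuclearNorm

section SVM

variable {V m : ℕ} {S : Fin m → Finset (Fin V)}

theorem svmFeasibleS.submatrix_perm {L : Matrix (Fin V) (Fin m) ℝ} (hL : svmFeasibleS S L)
    {σ : Equiv.Perm (Fin m)} (hσ : ∀ c, S (σ c) = S c) : svmFeasibleS S (L.submatrix id σ) :=
  ⟨fun c z hz z' hz' => hL.1 (σ c) z (hσ c ▸ hz) z' (hσ c ▸ hz'),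
    fun c z hz v hv => hL.2 (σ c) z (hσ c ▸ hz) v (hσ c ▸ hv)⟩

theorem convex_setOf_svmFeasibleS :
    Convex ℝ {L : Matrix (Fin V) (Fin m) ℝ | svmFeasibleS S L} := by
  intro L hL L' hL' s t hs ht hst
  constructor
  · intro c z hz z' hz'
    simp only [Matrix.add_apply, Matrix.smul_apply, smul_eq_mul, hL.1 c z hz z' hz',
      hL'.1 c z hz z' hz']
  · intro c z hz v hv
    simp only [Matrix.add_apply, Matrix.smul_apply, smul_eq_mul]
    nlinarith [mul_le_mul_of_nonneg_left (hL.2 c z hz v hv) hs,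
      mul_le_mul_of_nonneg_left (hL'.2 c z hz v hv) ht]

end SVM

theorem stmt_18_general (V m : ℕ)
    (Ssets : Fin m → Finset (Fin V))
    (j j' : Fin m) (hSS : Ssets j = Ssets j')
    (Lmm : Matrix (Fin V) (Fin m) ℝ)
    (hfeas : svmFeasibleS Ssets Lmm)
    (hopt : ∀ L : Matrix (Fin V) (Fin m) ℝ, svmFeasibleS Ssets L →
        nuclearNorm Lmm ≤ nuclearNorm L) :
    (svmFeasibleS Ssets
        (Matrix.of fun z c =>
          if c = j ∨ c = j' then (Lmm z j + Lmm z j') / 2 else Lmm z c) ∧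
      ∀ L : Matrix (Fin V) (Fin m) ℝ, svmFeasibleS Ssets L →
        nuclearNorm (Matrix.of fun z c =>
            if c = j ∨ c = j' then (Lmm z j + Lmm z j') / 2 else Lmm z c) ≤
          nuclearNorm L) ∧
    ∃ L' : Matrix (Fin V) (Fin m) ℝ,
      svmFeasibleS Ssets L' ∧
      (∀ L : Matrix (Fin V) (Fin m) ℝ, svmFeasibleS Ssets L →
          nuclearNorm L' ≤ nuclearNorm L) ∧
      ∀ z : Fin V, L' z j = L' z j' := by
  set σ := Equiv.swap j j'
  set M : Matrix (Fin V) (Fin m) ℝ :=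
    Matrix.of fun z c => if c = j ∨ c = j' then (Lmm z j + Lmm z j') / 2 else Lmm z c
  have hσ : ∀ c, Ssets (σ c) = Ssets c := fun c => by
    rcases eq_or_ne c j with rfl | hcj
    · simp [σ, hSS]
    rcases eq_or_ne c j' with rfl | hcj'
    · simp [σ, hSS]
    · rw [Equiv.swap_apply_of_ne_of_ne hcj hcj']
  have hM : M = (1 / 2 : ℝ) • Lmm + (1 / 2 : ℝ) • Lmm.submatrix id σ := by
    ext z c
    simp only [M, σ, Matrix.of_apply, Matrix.add_apply, Matrix.smul_apply, Matrix.submatrix_apply,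
      id, smul_eq_mul, Equiv.swap_apply_def]
    split_ifs <;> simp_all <;> ring
  have hMfeas : svmFeasibleS Ssets M := hM ▸ convex_setOf_svmFeasibleS hfeas
    (hfeas.submatrix_perm hσ) (by norm_num) (by norm_num) (by norm_num)
  have hMopt : ∀ L, svmFeasibleS Ssets L → nuclearNorm M ≤ nuclearNorm L := fun L hL =>
    calc nuclearNorm M
        ≤ 1 / 2 * nuclearNorm Lmm + 1 / 2 * nuclearNorm (Lmm.submatrix id σ) :=
          hM ▸ convexOn_nuclearNorm.2 trivial trivial (by norm_num) (by norm_num) (by norm_num)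
      _ = nuclearNorm Lmm := by rw [nuclearNorm_submatrix_perm]; ring
      _ ≤ nuclearNorm L := hopt L hL
  exact ⟨⟨hMfeas, hMopt⟩, M, hMfeas, hMopt, fun z => by simp [M]⟩

/-- if two contexts `j ≠ j'` have identical support sets, then averaging the
`j`-th and `j'`-th columns of any NTP-SVM minimizer yields another minimizer; in particular
there is a minimizer whose `j`-th and `j'`-th columns coincide. -/
theorem stmt_18 (V m : ℕ) (hV : 2 ≤ V) (hm : 0 < m)
    (Ssets : Fin m → Finset (Fin V)) (hne : ∀ j, (Ssets j).Nonempty)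
    (j j' : Fin m) (hjj : j ≠ j') (hSS : Ssets j = Ssets j')
    (Lmm : Matrix (Fin V) (Fin m) ℝ)
    (hfeas : svmFeasibleS Ssets Lmm)
    (hopt : ∀ L : Matrix (Fin V) (Fin m) ℝ, svmFeasibleS Ssets L →
        nuclearNorm Lmm ≤ nuclearNorm L) :
    (svmFeasibleS Ssets
        (Matrix.of fun z c =>
          if c = j ∨ c = j' then (Lmm z j + Lmm z j') / 2 else Lmm z c) ∧
      ∀ L : Matrix (Fin V) (Fin m) ℝ, svmFeasibleS Ssets L →
        nuclearNorm (Matrix.of fun z c =>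
            if c = j ∨ c = j' then (Lmm z j + Lmm z j') / 2 else Lmm z c) ≤
          nuclearNorm L) ∧
    ∃ L' : Matrix (Fin V) (Fin m) ℝ,
      svmFeasibleS Ssets L' ∧
      (∀ L : Matrix (Fin V) (Fin m) ℝ, svmFeasibleS Ssets L →
          nuclearNorm L' ≤ nuclearNorm L) ∧
      ∀ z : Fin V, L' z j = L' z j' :=
  stmt_18_general V m Ssets j j' hSS Lmm hfeas hopt
end
end
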